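/- arXiv:1003.5420 — 7 statements merged into one kernel-verified Lean document; each statement's English description precedes it below -/
import Mathlib

section
/- For any 2×2 matrices X and Y over a commutative ring S, det[X,Y] = 2·det(X)·det(Y) − tr(X·Y·X′·Y′), where M′ denotes the classical adjoint of M. -/
theorem det_commutator_eq_two_det_mul_det_sub_trace {S : Type*} [CommRing S]
    (X Y : Matrix (Fin 2) (Fin 2) S) :
    (X * Y - Y * X).det =
      2 * (X.det * Y.det) - Matrix.trace (X * Y * X.adjugate * Y.adjugate) := by
  simp [Matrix.det_fin_two, Matrix.adjugate_fin_two, Matrix.trace_fin_two,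
    Matrix.mul_apply, Fin.sum_univ_two]
  ring
end

section
/- Fix q in a commutative ring S and let X, Y be 2×2 matrices over S with tr_q(X) = tr_q(Y) = 0, where tr_q(M) := m₁₁ + q·m₂₂ is the q-trace. Then q·det[X,Y] = (1+q)²·det(XY) − tr_q(XY)·tr_q(YX). -/
/-- The `q`-trace of a 2×2 matrix: `trq q M = M 0 0 + q * M 1 1`. -/
def trq {S : Type*} [CommRing S] (q : S) (M : Matrix (Fin 2) (Fin 2) S) : S :=
  M 0 0 + q * M 1 1

theorem q_det_commutator_of_q_traceless {S : Type*} [CommRing S] (q : S)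
    (X Y : Matrix (Fin 2) (Fin 2) S)
    (hX : trq q X = 0) (hY : trq q Y = 0) :
    q * (X * Y - Y * X).det =
      (1 + q) ^ 2 * (X * Y).det - trq q (X * Y) * trq q (Y * X) := by
  have hx : X 0 0 = -(q * X 1 1) := by have := hX; unfold trq at this; linear_combination this
  have hy : Y 0 0 = -(q * Y 1 1) := by have := hY; unfold trq at this; linear_combination this
  simp only [trq, Matrix.det_fin_two, Matrix.sub_apply, Matrix.mul_apply,
    Fin.sum_univ_two, hx, hy]
  ring
end

section
/- Fix q in a commutative ring S and let X, Y be 2×2 matrices over S with determinants δ = det(X), δ′ = det(Y), traces t = tr(X), t′ = tr(Y), and q-traces τ = tr_q(X), τ′ = tr_q(Y). Let σ = tr_q(XY) and σ′ = tr_q(YX). Then q·det[X,Y] = (1+q)²·δ′·δ − (1+q)·(δ·t′·τ′ + δ′·t·τ) + (δ·τ′² + δ′·τ² + tr(XY)·τ′·τ − σ′·σ). -/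
theorem quantum_trace_determinantal_formula {S : Type*} [CommRing S] (q : S)
    (X Y : Matrix (Fin 2) (Fin 2) S) :
    q * (X * Y - Y * X).det =
      (1 + q) ^ 2 * (Y.det * X.det)
        - (1 + q) * (X.det * Matrix.trace Y * trq q Y + Y.det * Matrix.trace X * trq q X)
        + (X.det * (trq q Y) ^ 2 + Y.det * (trq q X) ^ 2
            + Matrix.trace (X * Y) * trq q Y * trq q X
            - trq q (Y * X) * trq q (X * Y)) := by
  simp [Matrix.det_fin_two, Matrix.trace_fin_two, trq, Matrix.mul_apply, Fin.sum_univ_succ, Matrix.sub_apply]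
  ring
end

section
/- Let X and Y be 2×2 matrices over a commutative ring S with determinants δ = det(X), δ′ = det(Y) and traces t = tr(X), t′ = tr(Y). Then det[X,Y] = 4·δ′·δ − (tr(XY))² − δ·t′² − δ′·t² + tr(XY)·t′·t. -/
theorem trace_version_determinantal_formula {S : Type*} [CommRing S]
    (X Y : Matrix (Fin 2) (Fin 2) S) :
    (X * Y - Y * X).det =
      4 * (Y.det * X.det) - (Matrix.trace (X * Y)) ^ 2
        - X.det * (Matrix.trace Y) ^ 2 - Y.det * (Matrix.trace X) ^ 2
        + Matrix.trace (X * Y) * Matrix.trace Y * Matrix.trace X := by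
  simp [Matrix.det_fin_two, Matrix.trace_fin_two, Matrix.mul_apply, Fin.sum_univ_succ, Matrix.sub_apply]
  ring
end

section
/- Let S be a commutative ring, let t, δ ∈ S, and let n be an element of the value set V[1,t,δ] = { x² + t·x·y + δ·y² : x, y ∈ S }. Then there exist 2×2 matrices X, Y over S such that tr(X) = t, det(X) = δ, and n = −det[X,Y]. -/
theorem norm_theorem_ring_version_part1 {S : Type*} [CommRing S] (t δ n : S)
    (hn : ∃ x y : S, n = x ^ 2 + t * x * y + δ * y ^ 2) :
    ∃ X Y : Matrix (Fin 2) (Fin 2) S,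
      Matrix.trace X = t ∧ X.det = δ ∧ n = -(X * Y - Y * X).det := by
  obtain ⟨x, y, rfl⟩ := hn
  refine ⟨!![0, -δ; 1, t], !![0, x; 0, y], ?_, ?_, ?_⟩
  · simp [Matrix.trace_fin_two]
  · simp [Matrix.det_fin_two]
  · simp [Matrix.det_fin_two, Matrix.mul_apply, Fin.sum_univ_two]
    ring
end

section
/- Let S be a commutative ring and let X = ((a,b),(c,d)) be a 2×2 matrix over S with t = tr(X) and δ = det(X). Then for every 2×2 matrix Y over S, the element −c²·det[X,Y] lies in the value set V[1,t,δ] = { x² + t·x·y + δ·y² : x, y ∈ S }, and −4·c²·det[X,Y] lies in V[1,−Δ] = { x² − Δ·y² : x, y ∈ S }, where Δ = t² − 4δ. -/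
theorem norm_theorem_ring_version_part2 {S : Type*} [CommRing S]
    (X Y : Matrix (Fin 2) (Fin 2) S) :
    (∃ x y : S, -(X 1 0) ^ 2 * (X * Y - Y * X).det =
        x ^ 2 + Matrix.trace X * x * y + X.det * y ^ 2) ∧
    (∃ x y : S, -(4 * (X 1 0) ^ 2 * (X * Y - Y * X).det) =
        x ^ 2 - ((Matrix.trace X) ^ 2 - 4 * X.det) * y ^ 2) := by
  set M := X * Y - Y * X with hM
  constructor
  · refine ⟨X 1 0 * M 0 0 - X 0 0 * M 1 0, M 1 0, ?_⟩
    simp only [hM, Matrix.det_fin_two, Matrix.trace_fin_two, Matrix.sub_apply,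
      Matrix.mul_apply, Fin.sum_univ_two]
    ring
  · refine ⟨2 * (X 1 0 * M 0 0 - X 0 0 * M 1 0) + Matrix.trace X * M 1 0, M 1 0, ?_⟩
    simp only [hM, Matrix.det_fin_two, Matrix.trace_fin_two, Matrix.sub_apply,
      Matrix.mul_apply, Fin.sum_univ_two]
    ring
end

section
/- Let S be a commutative ring, let p, q, c ∈ S, and suppose c = p·r² + q·s² for some r, s ∈ S (i.e., the point (r,s) lies on the conic C = {(r,s) ∈ S² : p·r² + q·s² = c}). Define x = r·(2·q·s − r), y = −s·(2·p·r + s), and z = r·s + p·r² − q·s². Then p·x + q·y = −c and x·y − z² = −c²; that is, the map f(r,s) = (x,y,z) sends the conic C into the intersection of the plane P = {(x,y,z) ∈ S³ : p·x + q·y = −c} with the quadric Q = {(x,y,z) ∈ S³ : x·y − z² = −c²}. -/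
theorem conic_to_plane_quadric {S : Type*} [CommRing S] (p q c r s : S)
    (h : p * r ^ 2 + q * s ^ 2 = c) :
    p * (r * (2 * q * s - r)) + q * (-s * (2 * p * r + s)) = -c ∧
    (r * (2 * q * s - r)) * (-s * (2 * p * r + s))
        - (r * s + p * r ^ 2 - q * s ^ 2) ^ 2 = -c ^ 2 := by
  subst h
  constructor <;> ring
end
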